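/- arXiv:2204.06710 — 3 statements merged into one kernel-verified Lean document; each statement's English description precedes it below -/
import Mathlib

section
/- For every integer n ≥ 1, the function φ₀ satisfies the ordinary differential equation ρ φ₀''(ρ) + (n−1) φ₀'(ρ) = ρ φ₀(ρ) for every ρ ∈ ℝ; in particular φ₀''(ρ) + ((n−1)/ρ) φ₀'(ρ) = φ₀(ρ) for every ρ ≠ 0. -/
/-!
From the definition, `b` satisfies the recurrence `2 (j + 1) (n + 2 j) b_{j+1} = b_j`, and for
`n ≥ 1` it is dominated by `1 / j!`, so the series for `φ₀`, `φ₀'` and `φ₀''` converge absolutely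
everywhere and may be differentiated term by term. Writing
`φ₀' ρ = ∑ (2j+2) b_{j+1} ρ^(2j+1)` and `φ₀'' ρ = ∑ (2j+2)(2j+1) b_{j+1} ρ^(2j)`, the coefficient
of `ρ^(2j+1)` in `ρ φ₀'' + (n - 1) φ₀'` is `(2j+2)(n+2j) b_{j+1} = b_j`, that of `ρ φ₀`.
-/

open Real Filter

noncomputable def b (n : ℕ) (j : ℕ) : ℝ :=
  ∏ ℓ ∈ Finset.Icc 1 j, 1 / (2 * (ℓ : ℝ) * ((n : ℝ) + 2 * ((ℓ : ℝ) - 1)))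

noncomputable def phi0 (n : ℕ) (ρ : ℝ) : ℝ := ∑' j : ℕ, b n j * ρ ^ (2 * j)

open scoped Nat

section TermwiseDeriv

variable {a : ℕ → ℝ} {k : ℕ → ℕ}

theorem hasDerivAt_tsum_mul_pow_succ
    (ha : ∀ x, Summable fun j => ‖a j * (k j + 1) * x ^ k j‖) (x : ℝ) :
    HasDerivAt (fun y => ∑' j, a j * y ^ (k j + 1)) (∑' j, a j * (k j + 1) * x ^ k j) x := by
  have hR : 0 < |x| + 1 := by positivity
  refine hasDerivAt_tsum_of_isPreconnected (g := fun j y => a j * y ^ (k j + 1))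
    (g' := fun j y => a j * (k j + 1) * y ^ k j) (ha (|x| + 1)) Metric.isOpen_ball
    (convex_ball (0 : ℝ) (|x| + 1)).isPreconnected (fun j y _ => ?_) (fun j y hy => ?_)
    (Metric.mem_ball_self hR) ?_ (by simp)
  · simpa [mul_assoc] using (hasDerivAt_pow (k j + 1) y).const_mul (a j)
  · have hy' : ‖y‖ ≤ ‖|x| + 1‖ := by
      rw [Real.norm_of_nonneg hR.le]
      exact (mem_ball_zero_iff.mp hy).le
    simp only [norm_mul, norm_pow]
    gcongr
  · simp only [zero_pow (Nat.succ_ne_zero _), mul_zero]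
    exact summable_zero

end TermwiseDeriv

theorem summable_norm_mul_pow_two_mul {c : ℕ → ℝ} (hc : ∀ j, |c j| ≤ (j ! : ℝ)⁻¹) (x : ℝ) :
    Summable fun j => ‖c j * x ^ (2 * j)‖ := by
  refine .of_nonneg_of_le (fun _ => norm_nonneg _) (fun j => ?_)
    (Real.summable_pow_div_factorial (x ^ 2))
  rw [norm_mul, Real.norm_eq_abs, norm_pow, Real.norm_eq_abs, pow_mul, sq_abs, div_eq_inv_mul]
  gcongr
  exact hc j

theorem b_zero (n : ℕ) : b n 0 = 1 := by simp [b]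

theorem b_succ (n j : ℕ) : b n (j + 1) = b n j / (2 * (j + 1) * (n + 2 * j)) := by
  rw [b, Finset.prod_Icc_succ_top (by omega), ← b]
  push_cast
  ring

section Coefficients

variable {n : ℕ}

theorem b_succ_denom_pos (hn : 1 ≤ n) (j : ℕ) : 0 < 2 * ((j : ℝ) + 1) * (n + 2 * j) := by
  have : (1 : ℝ) ≤ n := by exact_mod_cast hn
  positivity

theorem b_pos (hn : 1 ≤ n) (j : ℕ) : 0 < b n j := by
  induction j with
  | zero => simp [b_zero]
  | succ j ih => rw [b_succ]; exact div_pos ih (b_succ_denom_pos hn j)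

theorem mul_b_succ (hn : 1 ≤ n) (j : ℕ) : 2 * (j + 1) * (n + 2 * j) * b n (j + 1) = b n j := by
  rw [b_succ, mul_div_cancel₀ _ (b_succ_denom_pos hn j).ne']

theorem b_le_inv_factorial (hn : 1 ≤ n) (j : ℕ) : b n j ≤ (j ! : ℝ)⁻¹ := by
  induction j with
  | zero => simp [b_zero]
  | succ j ih =>
    have hn' : (1 : ℝ) ≤ n := by exact_mod_cast hn
    have hj : (j + 1 : ℝ) ≤ 2 * (j + 1) * (n + 2 * j) := by nlinarith
    calc b n (j + 1) = b n j / (2 * (j + 1) * (n + 2 * j)) := b_succ n j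
      _ ≤ (j ! : ℝ)⁻¹ / (j + 1) := by gcongr
      _ = ((j + 1)! : ℝ)⁻¹ := by push_cast [Nat.factorial_succ]; field_simp

theorem phi0''_coeff_le_b (hn : 1 ≤ n) (j : ℕ) :
    (2 * j + 2) * (2 * j + 1) * b n (j + 1) ≤ b n j := by
  have hn' : (1 : ℝ) ≤ n := by exact_mod_cast hn
  rw [← mul_b_succ hn j]
  have := b_pos hn (j + 1)
  gcongr ?_ * _
  nlinarith

theorem phi0'_coeff_le_b (hn : 1 ≤ n) (j : ℕ) :
    (2 * j + 2) * b n (j + 1) ≤ b n j :=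
  calc (2 * j + 2) * b n (j + 1) = (2 * j + 2) * 1 * b n (j + 1) := by ring
    _ ≤ (2 * j + 2) * (2 * j + 1) * b n (j + 1) := by
      have := b_pos hn (j + 1)
      gcongr
      linarith [j.cast_nonneg (α := ℝ)]
    _ ≤ b n j := phi0''_coeff_le_b hn j

theorem summable_norm_mul_pow_two_mul_of_le_b (hn : 1 ≤ n) {c : ℕ → ℝ} (hc0 : ∀ j, 0 ≤ c j)
    (hc : ∀ j, c j ≤ b n j) (x : ℝ) : Summable fun j => ‖c j * x ^ (2 * j)‖ :=
  summable_norm_mul_pow_two_mul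
    (fun j => (abs_of_nonneg (hc0 j)).trans_le ((hc j).trans (b_le_inv_factorial hn j))) x

theorem summable_b_mul_pow (hn : 1 ≤ n) (x : ℝ) : Summable fun j => b n j * x ^ (2 * j) :=
  (summable_norm_mul_pow_two_mul_of_le_b hn (fun j => (b_pos hn j).le) (fun _ => le_rfl) x).of_norm

theorem summable_phi0'_series (hn : 1 ≤ n) (x : ℝ) :
    Summable fun j => ‖(2 * j + 2) * b n (j + 1) * x ^ (2 * j)‖ :=
  summable_norm_mul_pow_two_mul_of_le_b hn (fun j => by have := b_pos hn (j + 1); positivity)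
    (phi0'_coeff_le_b hn) x

theorem summable_phi0''_series (hn : 1 ≤ n) (x : ℝ) :
    Summable fun j => ‖(2 * j + 2) * (2 * j + 1) * b n (j + 1) * x ^ (2 * j)‖ :=
  summable_norm_mul_pow_two_mul_of_le_b hn (fun j => by have := b_pos hn (j + 1); positivity)
    (phi0''_coeff_le_b hn) x

end Coefficients

noncomputable def phi0' (n : ℕ) (ρ : ℝ) : ℝ := ∑' j : ℕ, (2 * j + 2) * b n (j + 1) * ρ ^ (2 * j + 1)

theorem phi0_eq_one_add {n : ℕ} (hn : 1 ≤ n) :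
    phi0 n = fun ρ => 1 + ∑' j : ℕ, b n (j + 1) * ρ ^ (2 * j + 1 + 1) := by
  funext ρ
  rw [phi0, (summable_b_mul_pow hn ρ).tsum_eq_zero_add, b_zero]
  simp [mul_add]

theorem hasDerivAt_phi0 {n : ℕ} (hn : 1 ≤ n) (ρ : ℝ) : HasDerivAt (phi0 n) (phi0' n ρ) ρ := by
  have hsum (x : ℝ) :
      Summable fun j => ‖b n (j + 1) * (((2 * j + 1 : ℕ) : ℝ) + 1) * x ^ (2 * j + 1)‖ := by
    refine ((summable_phi0'_series hn x).mul_left ‖x‖).congr fun j => ?_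
    rw [← norm_mul]
    push_cast
    ring_nf
  rw [phi0_eq_one_add hn]
  refine ((hasDerivAt_tsum_mul_pow_succ (k := fun j => 2 * j + 1) hsum ρ).const_add 1).congr_deriv
    (tsum_congr fun j => ?_)
  push_cast
  ring

theorem hasDerivAt_phi0' {n : ℕ} (hn : 1 ≤ n) (ρ : ℝ) :
    HasDerivAt (phi0' n) (∑' j : ℕ, (2 * j + 2) * (2 * j + 1) * b n (j + 1) * ρ ^ (2 * j)) ρ := by
  have hsum (x : ℝ) :
      Summable fun j => ‖(2 * j + 2) * b n (j + 1) * (((2 * j : ℕ) : ℝ) + 1) * x ^ (2 * j)‖ := by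
    refine (summable_phi0''_series hn x).congr fun j => ?_
    push_cast
    ring_nf
  refine (hasDerivAt_tsum_mul_pow_succ (k := fun j => 2 * j) hsum ρ).congr_deriv
    (tsum_congr fun j => ?_)
  push_cast
  ring

theorem phi0_ode_series {n : ℕ} (hn : 1 ≤ n) (ρ : ℝ) :
    ρ * (∑' j : ℕ, (2 * j + 2) * (2 * j + 1) * b n (j + 1) * ρ ^ (2 * j)) +
      ((n : ℝ) - 1) * phi0' n ρ = ρ * phi0 n ρ := by
  have h2 := (summable_phi0''_series hn ρ).of_norm.mul_left ρ
  have h1 : Summable fun j => ((n : ℝ) - 1) * ((2 * j + 2) * b n (j + 1) * ρ ^ (2 * j + 1)) :=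
    (((summable_phi0'_series hn ρ).of_norm.mul_left ρ).congr fun j => by ring).mul_left _
  rw [phi0', phi0, ← tsum_mul_left, ← tsum_mul_left, ← tsum_mul_left, ← h2.tsum_add h1]
  refine tsum_congr fun j => ?_
  rw [← mul_b_succ hn j]
  ring

theorem stmt1 (n : ℕ) (hn : 1 ≤ n) :
    (∀ ρ : ℝ,
      ρ * deriv (deriv (phi0 n)) ρ + ((n : ℝ) - 1) * deriv (phi0 n) ρ = ρ * phi0 n ρ) ∧
    (∀ ρ : ℝ, ρ ≠ 0 →
      deriv (deriv (phi0 n)) ρ + ((n : ℝ) - 1) / ρ * deriv (phi0 n) ρ = phi0 n ρ) := by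
  have hderiv : deriv (phi0 n) = phi0' n := funext fun ρ => (hasDerivAt_phi0 hn ρ).deriv
  have hode : ∀ ρ : ℝ,
      ρ * deriv (deriv (phi0 n)) ρ + ((n : ℝ) - 1) * deriv (phi0 n) ρ = ρ * phi0 n ρ := by
    intro ρ
    rw [hderiv, (hasDerivAt_phi0' hn ρ).deriv]
    exact phi0_ode_series hn ρ
  refine ⟨hode, fun ρ hρ => ?_⟩
  have := hode ρ
  field_simp
  linarith
end

section
/- Let n ≥ 1 be an integer and let φ be a real-valued function that is C² on the closed unit ball of ℝⁿ and satisfies Δφ = 0 in the open unit ball B^n (where Δ is the Euclidean Laplacian, i.e. the sum of the pure second partial derivatives) together with the critical-Robin boundary condition ⟨∇φ(x), x⟩ = φ(x) for every x with |x| = 1. Then φ is linear: there exists a ∈ ℝⁿ such that φ(x) = ⟨a, x⟩ for all x in the closed unit ball. -/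
/-
For `t ∈ (0, 1]` the function `F_t x = φ (t • x) - t * φ x` is harmonic in the ball. On the sphere
the Robin condition says that `F_t x` vanishes to second order at `t = 1`, so `|F_t| ≤ K (1 - t)²`
there, and by the maximum principle in the whole ball. The identity
`F_{u²} x = F_u (u • x) + u * F_u x` shows that the bound at most doubles when `t` is replaced by
`t²`; iterating gives `|F_t| ≤ K (log t)² / 2 ^ k` for every `k`. Hence `φ (t • x) = t * φ x`, and
a function that is homogeneous of degree one and differentiable at `0` is its own differential
there.
-/

open Real Filter Metric

open scoped RealInnerProductSpace

/-- The Euclidean Laplacian: the sum of the pure second partial derivatives. -/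
noncomputable def lap (n : ℕ) (φ : EuclideanSpace ℝ (Fin n) → ℝ)
    (x : EuclideanSpace ℝ (Fin n)) : ℝ :=
  ∑ i : Fin n,
    fderiv ℝ (fun y => fderiv ℝ φ y (EuclideanSpace.single i 1)) x
      (EuclideanSpace.single i 1)

open Set Topology InnerProductSpace Laplacian

theorem IsLocalMax.deriv_deriv_nonpos {f : ℝ → ℝ} {a : ℝ} (h : IsLocalMax f a)
    (hc : ContinuousAt f a) : deriv (deriv f) a ≤ 0 := by
  by_contra! hpos
  have hconst : f =ᶠ[𝓝 a] fun _ => f a := by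
    filter_upwards [h, isLocalMin_of_deriv_deriv_pos hpos h.deriv_eq_zero hc] with y hmax hmin
    exact le_antisymm hmax hmin
  have : deriv (deriv f) a = 0 := by simp [hconst.deriv.deriv_eq]
  exact hpos.ne' this

theorem IsLocalMax.fderiv_fderiv_apply_self_nonpos {E : Type*} [NormedAddCommGroup E]
    [NormedSpace ℝ E] {f : E → ℝ} {x : E} (h : IsLocalMax f x) (hf : ContDiffAt ℝ 2 f x)
    (e : E) : fderiv ℝ (fderiv ℝ f) x e e ≤ 0 := by
  set L : ℝ → E := fun t => x + t • e
  have hL (t : ℝ) : HasDerivAt L e t := by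
    have hsmul : HasDerivAt (fun t : ℝ => t • e) e t := by
      simpa using (hasDerivAt_id t).smul_const e
    exact hsmul.const_add x
  have hL0 : L 0 = x := by simp [L]
  have hLx : Tendsto L (𝓝 0) (𝓝 x) := hL0 ▸ (hL 0).continuousAt.tendsto
  have hderiv : deriv (f ∘ L) =ᶠ[𝓝 0] fun t => fderiv ℝ f (L t) e := by
    filter_upwards [hLx.eventually (hf.eventually (by simp))] with t ht
    exact ((ht.differentiableAt two_ne_zero).hasFDerivAt.comp_hasDerivAt t (hL t)).deriv
  have hderiv2 : HasDerivAt (fun t => fderiv ℝ f (L t) e) (fderiv ℝ (fderiv ℝ f) x e e) 0 := by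
    have hDf : HasFDerivAt (fderiv ℝ f) (fderiv ℝ (fderiv ℝ f) x) (L 0) := by
      rw [hL0]
      exact ((hf.fderiv_right (m := 1) le_rfl).differentiableAt one_ne_zero).hasFDerivAt
    simpa using (hDf.comp_hasDerivAt 0 (hL 0)).clm_apply (hasDerivAt_const 0 e)
  rw [← hderiv2.deriv, ← hderiv.deriv_eq]
  rw [← hL0] at h hf
  exact (h.comp_continuous (hL 0).continuousAt).deriv_deriv_nonpos
    (hf.continuousAt.comp (hL 0).continuousAt)

namespace InnerProductSpace

variable {E : Type*} [NormedAddCommGroup E] [InnerProductSpace ℝ E] [FiniteDimensional ℝ E]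
  {F : Type*} [NormedAddCommGroup F] [NormedSpace ℝ F]

theorem laplacian_eq_sum_fderiv_fderiv {ι : Type*} [Fintype ι] (v : OrthonormalBasis ι ℝ E)
    (f : E → F) (x : E) : Δ f x = ∑ i, fderiv ℝ (fderiv ℝ f) x (v i) (v i) := by
  simp [laplacian_eq_iteratedFDeriv_orthonormalBasis f v, iteratedFDeriv_two_apply]

theorem _root_.IsLocalMax.laplacian_nonpos {f : E → ℝ} {x : E} (h : IsLocalMax f x)
    (hf : ContDiffAt ℝ 2 f x) : Δ f x ≤ 0 := by
  rw [laplacian_eq_sum_fderiv_fderiv (stdOrthonormalBasis ℝ E)]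
  exact Finset.sum_nonpos fun i _ => h.fderiv_fderiv_apply_self_nonpos hf _

theorem laplacian_comp_smul (f : E → F) (c : ℝ) (x : E) :
    Δ (fun y => f (c • y)) x = c ^ 2 • Δ f (c • x) := by
  have hD : fderiv ℝ (fun y => f (c • y)) = c • fun y => fderiv ℝ f (c • y) :=
    funext fun y => fderiv_comp_smul c
  have hD2 :
      fderiv ℝ (fderiv ℝ fun y => f (c • y)) x = c ^ 2 • fderiv ℝ (fderiv ℝ f) (c • x) := by
    rw [hD, fderiv_const_smul_field (𝕜 := ℝ) c (f := fun y => fderiv ℝ f (c • y)),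
      Pi.smul_apply, fderiv_comp_smul, smul_smul, sq]
  simp [laplacian_eq_sum_fderiv_fderiv (stdOrthonormalBasis ℝ E), hD2, Finset.smul_sum]

theorem laplacian_norm_sq (x : E) :
    Δ (fun y : E => ‖y‖ ^ 2) x = 2 * Module.finrank ℝ E := by
  have hD2 (v : E) : fderiv ℝ (fderiv ℝ fun y : E => ‖y‖ ^ 2) x v v = 2 * ‖v‖ ^ 2 := by
    have hD : fderiv ℝ (fun y : E => ‖y‖ ^ 2) = ⇑((2 : ℝ) • innerSL ℝ (E := E)) := by
      ext1 y; simp [two_smul]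
    rw [hD, ContinuousLinearMap.fderiv]
    simp only [smul_apply, smul_eq_mul]
    exact congrArg (2 * ·) (real_inner_self_eq_norm_sq v)
  simp [laplacian_eq_sum_fderiv_fderiv (stdOrthonormalBasis ℝ E), hD2, mul_comm]

theorem HarmonicAt.comp_smul {f : E → F} {c : ℝ} {x : E} (h : HarmonicAt f (c • x)) :
    HarmonicAt (fun y => f (c • y)) x := by
  refine ⟨h.1.comp x (contDiffAt_id.const_smul c), ?_⟩
  have hc : Tendsto (fun y : E => c • y) (𝓝 x) (𝓝 (c • x)) := (continuous_const_smul c).tendsto x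
  filter_upwards [hc.eventually h.2] with y hy
  simp [laplacian_comp_smul, hy]

theorem HarmonicContOnCl.comp_smul_sub_mul {U : Set E} {φ : E → ℝ} {t : ℝ}
    (hφ : HarmonicContOnCl φ U) (hU : StarConvex ℝ 0 U) (ht : t ∈ Icc (0 : ℝ) 1) :
    HarmonicContOnCl (fun x => φ (t • x) - t * φ x) U := by
  have hmaps : MapsTo (t • ·) (closure U) (closure U) := fun x hx =>
    map_mem_closure (continuous_const_smul t) hx fun y hy => hU.smul_mem hy ht.1 ht.2
  refine ⟨fun x hx => ?_, (hφ.continuousOn.comp (continuous_const_smul t).continuousOn hmaps).sub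
    (continuousOn_const.mul hφ.continuousOn)⟩
  exact (hφ.harmonicOnNhd _ (hU.smul_mem hx ht.1 ht.2)).comp_smul.sub
    ((hφ.harmonicOnNhd x hx).const_smul (c := t))

section MaximumPrinciple

variable {U : Set E} {C : ℝ}

theorem le_of_forall_frontier_le_of_laplacian_pos {v : E → ℝ} (hU : IsOpen U)
    (hUb : Bornology.IsBounded U) (hc : ContinuousOn v (closure U))
    (hv : ∀ x ∈ U, ContDiffAt ℝ 2 v x) (hpos : ∀ x ∈ U, 0 < Δ v x)
    (hb : ∀ x ∈ frontier U, v x ≤ C) : ∀ x ∈ closure U, v x ≤ C := by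
  intro x hx
  obtain ⟨x₀, hx₀, hmax⟩ := hUb.isCompact_closure.exists_isMaxOn ⟨x, hx⟩ hc
  by_cases hfr : x₀ ∈ frontier U
  · exact (hmax hx).trans (hb x₀ hfr)
  have hx₀U : x₀ ∈ U := by
    by_contra hx₀U
    exact hfr ⟨hx₀, by rwa [hU.interior_eq]⟩
  have hloc : IsLocalMax v x₀ :=
    hmax.isLocalMax (mem_of_superset (hU.mem_nhds hx₀U) subset_closure)
  exact absurd (hloc.laplacian_nonpos (hv x₀ hx₀U)) (hpos x₀ hx₀U).not_ge

theorem HarmonicContOnCl.le_of_forall_frontier_le [Nontrivial E] {f : E → ℝ}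
    (hf : HarmonicContOnCl f U) (hU : IsOpen U) (hUb : Bornology.IsBounded U)
    (hb : ∀ x ∈ frontier U, f x ≤ C) : ∀ x ∈ closure U, f x ≤ C := by
  obtain ⟨r, hr⟩ := hUb.closure.subset_closedBall 0
  have hq : ContDiff ℝ 2 fun y : E => ‖y‖ ^ 2 := contDiff_norm_sq ℝ
  have hperturb : ∀ ε > 0, ∀ x ∈ closure U, f x + ε * ‖x‖ ^ 2 ≤ C + ε * r ^ 2 := by
    intro ε hε
    have hεq : ∀ x, ContDiffAt ℝ 2 (ε • fun y : E => ‖y‖ ^ 2) x := fun x =>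
      hq.contDiffAt.const_smul ε
    refine le_of_forall_frontier_le_of_laplacian_pos (v := f + ε • fun y => ‖y‖ ^ 2) hU hUb
      (hf.continuousOn.add (hq.continuous.continuousOn.const_smul ε))
      (fun x hx => (hf.contDiffAt hx).add (hεq x)) (fun x hx => ?_)
      (fun x hx => ?_)
    · rw [(hf.contDiffAt hx).laplacian_add (hεq x),
        laplacian_smul ε hq.contDiffAt, (hf.harmonicOnNhd x hx).2.self_of_nhds, laplacian_norm_sq]
      have : (0 : ℝ) < Module.finrank ℝ E := by exact_mod_cast Module.finrank_pos
      simp only [Pi.zero_apply, smul_eq_mul, zero_add]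
      positivity
    · have hxr : ‖x‖ ≤ r := mem_closedBall_zero_iff.mp (hr (frontier_subset_closure hx))
      simp only [Pi.add_apply, Pi.smul_apply, smul_eq_mul]
      gcongr
      exact hb x hx
  intro x hx
  have hlim : Tendsto (fun ε => C + ε * r ^ 2) (𝓝[>] 0) (𝓝 C) := by
    refine ((?_ : Continuous fun ε : ℝ => C + ε * r ^ 2).tendsto' 0 C (by simp)).mono_left
      nhdsWithin_le_nhds
    fun_prop
  refine ge_of_tendsto hlim ?_
  filter_upwards [self_mem_nhdsWithin] with ε (hε : 0 < ε)
  nlinarith [hperturb ε hε x hx, sq_nonneg ‖x‖]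

theorem HarmonicContOnCl.abs_le_of_forall_frontier_abs_le [Nontrivial E] {f : E → ℝ}
    (hf : HarmonicContOnCl f U) (hU : IsOpen U) (hUb : Bornology.IsBounded U)
    (hb : ∀ x ∈ frontier U, |f x| ≤ C) : ∀ x ∈ closure U, |f x| ≤ C := by
  intro x hx
  have hle := hf.le_of_forall_frontier_le hU hUb (fun y hy => (abs_le.mp (hb y hy)).2) x hx
  have hge := hf.neg.le_of_forall_frontier_le hU hUb
    (fun y hy => neg_le.mpr (abs_le.mp (hb y hy)).1) x hx
  exact abs_le.mpr ⟨neg_le.mp hge, hle⟩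

end MaximumPrinciple

end InnerProductSpace

section Homogeneity

variable {E : Type*} [AddCommGroup E] [Module ℝ E] {S : Set E} {φ : E → ℝ} {K : ℝ}

theorem abs_comp_pow_two_pow_smul_sub_le (hS : StarConvex ℝ 0 S)
    (h : ∀ t ∈ Ioc (0 : ℝ) 1, ∀ x ∈ S, |φ (t • x) - t * φ x| ≤ K * (1 - t) ^ 2) (k : ℕ) :
    ∀ t ∈ Ioc (0 : ℝ) 1, ∀ x ∈ S,
      |φ (t ^ 2 ^ k • x) - t ^ 2 ^ k * φ x| ≤ 2 ^ k * K * (1 - t) ^ 2 := by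
  induction k with
  | zero => simpa using h
  | succ k ih =>
    intro t ht x hx
    set u := t ^ 2 ^ k
    have hu : u ∈ Ioc (0 : ℝ) 1 := ⟨pow_pos ht.1 _, pow_le_one₀ ht.1.le ht.2⟩
    have hsplit : φ (t ^ 2 ^ (k + 1) • x) - t ^ 2 ^ (k + 1) * φ x =
        (φ (u • u • x) - u * φ (u • x)) + u * (φ (u • x) - u * φ x) := by
      rw [pow_succ, pow_mul, sq, smul_smul]
      ring
    calc |φ (t ^ 2 ^ (k + 1) • x) - t ^ 2 ^ (k + 1) * φ x|
        ≤ |φ (u • u • x) - u * φ (u • x)| + u * |φ (u • x) - u * φ x| := by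
          rw [hsplit, ← abs_of_pos hu.1, ← abs_mul, abs_of_pos hu.1]
          exact abs_add_le _ _
      _ ≤ 2 ^ k * K * (1 - t) ^ 2 + 1 * (2 ^ k * K * (1 - t) ^ 2) :=
          add_le_add (ih t ht _ (hS.smul_mem hx hu.1.le hu.2))
            (mul_le_mul hu.2 (ih t ht x hx) (abs_nonneg _) zero_le_one)
      _ = 2 ^ (k + 1) * K * (1 - t) ^ 2 := by ring

theorem comp_smul_eq_of_abs_sub_le_sq (hS : StarConvex ℝ 0 S)
    (h : ∀ t ∈ Ioc (0 : ℝ) 1, ∀ x ∈ S, |φ (t • x) - t * φ x| ≤ K * (1 - t) ^ 2) :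
    ∀ t ∈ Ioc (0 : ℝ) 1, ∀ x ∈ S, φ (t • x) = t * φ x := by
  intro t ht x hx
  have hK : 0 ≤ K := by
    have := h (1 / 2) ⟨by norm_num, by norm_num⟩ x hx
    nlinarith [abs_nonneg (φ ((1 / 2 : ℝ) • x) - 1 / 2 * φ x)]
  set L := -log t
  have hbound : ∀ k : ℕ, |φ (t • x) - t * φ x| ≤ K * L ^ 2 * (1 / 2) ^ k := by
    intro k
    set s := t ^ ((1 : ℝ) / 2 ^ k)
    have hs : s ∈ Ioc (0 : ℝ) 1 :=
      ⟨rpow_pos_of_pos ht.1 _, rpow_le_one ht.1.le ht.2 (by positivity)⟩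
    have hst : s ^ 2 ^ k = t := by
      rw [← rpow_natCast, ← rpow_mul ht.1.le]
      simp
    have h1s : 1 - s ≤ L / 2 ^ k := by
      have hlog : L / 2 ^ k = -log s := by rw [log_rpow ht.1]; ring
      linarith [log_le_sub_one_of_pos hs.1]
    calc |φ (t • x) - t * φ x| ≤ 2 ^ k * K * (1 - s) ^ 2 := by
          simpa [hst] using abs_comp_pow_two_pow_smul_sub_le hS h k s hs x hx
      _ ≤ 2 ^ k * K * (L / 2 ^ k) ^ 2 := by
          gcongr
          linarith [hs.2]
      _ = K * L ^ 2 * (1 / 2) ^ k := by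
          have h2 : (2 : ℝ) ^ k * (1 / 2) ^ k = 1 := by rw [← mul_pow]; norm_num
          field_simp
          linear_combination (-(K * L ^ 2)) * h2
  have hlim : Tendsto (fun k : ℕ => K * L ^ 2 * (1 / 2 : ℝ) ^ k) atTop (𝓝 0) := by
    simpa using (tendsto_pow_atTop_nhds_zero_of_lt_one (r := (1 / 2 : ℝ)) (by norm_num)
      (by norm_num)).const_mul (K * L ^ 2)
  have := ge_of_tendsto' hlim hbound
  linarith [abs_nonpos_iff.mp this]

end Homogeneity

theorem eq_fderiv_apply_of_comp_smul_eq {E : Type*} [NormedAddCommGroup E] [NormedSpace ℝ E]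
    {φ : E → ℝ} {x : E} (hφ : DifferentiableAt ℝ φ 0)
    (h : ∀ t ∈ Ioc (0 : ℝ) 1, φ (t • x) = t * φ x) : φ x = fderiv ℝ φ 0 x := by
  have hline : HasDerivAt (fun t : ℝ => φ (t • x)) (fderiv ℝ φ 0 x) 0 := by
    have hφ' : HasFDerivAt φ (fderiv ℝ φ 0) ((0 : ℝ) • x) := by simpa using hφ.hasFDerivAt
    exact hφ'.comp_hasDerivAt (0 : ℝ)
      (by simpa using (hasDerivAt_id (0 : ℝ)).smul_const x : HasDerivAt (fun t : ℝ => t • x) x 0)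
  have heq : (fun t : ℝ => φ (t • x)) =ᶠ[𝓝[>] 0] fun t => t * φ x := by
    filter_upwards [Ioc_mem_nhdsGT one_pos] with t ht using h t ht
  have hφ0 : φ 0 = 0 := by
    have h1 : Tendsto (fun t : ℝ => φ (t • x)) (𝓝[>] 0) (𝓝 (φ 0)) := by
      simpa using hline.continuousAt.tendsto.mono_left nhdsWithin_le_nhds
    have h2 : Tendsto (fun t : ℝ => t * φ x) (𝓝[>] 0) (𝓝 0) := by
      simpa using ((continuous_mul_const (φ x)).tendsto 0).mono_left nhdsWithin_le_nhds
    exact tendsto_nhds_unique (h1.congr' heq) h2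
  refine tendsto_nhds_unique (tendsto_const_nhds.congr' ?_) hline.tendsto_slope_zero_right
  filter_upwards [heq, self_mem_nhdsWithin] with t ht (htpos : 0 < t)
  simp [ht, hφ0, htpos.ne']

theorem exists_abs_comp_smul_sub_le_sq {E : Type*} [NormedAddCommGroup E] [NormedSpace ℝ E]
    [FiniteDimensional ℝ E] {φ : E → ℝ} (hC2 : ContDiffOn ℝ 2 φ (closedBall 0 1))
    (hbc : ∀ x : E, ‖x‖ = 1 → fderivWithin ℝ φ (closedBall 0 1) x x = φ x) :
    ∃ K : ℝ, ∀ t ∈ Icc (0 : ℝ) 1, ∀ x : E, ‖x‖ = 1 →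
      |φ (t • x) - t * φ x| ≤ K * (1 - t) ^ 2 := by
  set B := closedBall (0 : E) 1
  have hB : UniqueDiffOn ℝ B :=
    uniqueDiffOn_convex (convex_closedBall 0 1) (by simp [B, interior_closedBall])
  set D := fderivWithin ℝ φ B
  obtain ⟨K, hK⟩ := (hC2.fderivWithin hB (m := 1) (by norm_num)).exists_lipschitzOnWith
    one_ne_zero (convex_closedBall 0 1) (isCompact_closedBall 0 1)
  refine ⟨K, fun t ht x hx => ?_⟩
  have hseg : ∀ u ∈ Icc t 1, u • x ∈ B := fun u hu => by
    simp [B, norm_smul, hx, abs_of_nonneg (ht.1.trans hu.1), hu.2]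
  have hderiv : ∀ u ∈ Icc t 1, HasDerivWithinAt (fun u : ℝ => φ (u • x) - u * φ x)
      (D (u • x) x - φ x) (Icc t 1) u := by
    intro u hu
    have hφ := ((hC2.differentiableOn (by norm_num)) _ (hseg u hu)).hasFDerivWithinAt
    have := (hφ.comp_hasDerivWithinAt u ((hasDerivAt_id u).smul_const x).hasDerivWithinAt
      hseg).sub ((hasDerivAt_id u).mul_const (φ x)).hasDerivWithinAt
    simp only [one_smul, one_mul] at this
    exact this
  -- by the Robin condition the derivative is `(D (u • x) - D x) x`, and `D` is Lipschitz
  have hbound : ∀ u ∈ Ico t 1, ‖D (u • x) x - φ x‖ ≤ K * (1 - t) := by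
    intro u hu
    have hxB : x ∈ B := by simp [B, hx]
    rw [← hbc x hx, ← sub_apply]
    calc ‖(D (u • x) - D x) x‖ ≤ ‖D (u • x) - D x‖ := by
          simpa [hx] using (D (u • x) - D x).le_opNorm x
      _ ≤ K * ‖u • x - x‖ := by
          simpa [dist_eq_norm] using hK.dist_le_mul _ (hseg u (Ico_subset_Icc_self hu)) _ hxB
      _ = K * (1 - u) := by
          have : u • x - x = (u - 1) • x := by rw [sub_smul, one_smul]
          rw [this, norm_smul, hx, mul_one, norm_sub_rev, norm_of_nonneg (by linarith [hu.2])]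
      _ ≤ K * (1 - t) := by gcongr; exact hu.1
  have := norm_image_sub_le_of_norm_deriv_le_segment' hderiv hbound 1 (right_mem_Icc.2 ht.2)
  simpa [abs_sub_comm, sq, mul_assoc] using this

theorem lap_eq_laplacian {n : ℕ} {φ : EuclideanSpace ℝ (Fin n) → ℝ}
    {x : EuclideanSpace ℝ (Fin n)} (hφ : ContDiffAt ℝ 2 φ x) : lap n φ x = Δ φ x := by
  rw [laplacian_eq_sum_fderiv_fderiv (EuclideanSpace.basisFun (Fin n) ℝ), lap]
  refine Finset.sum_congr rfl fun i _ => ?_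
  have hD : DifferentiableAt ℝ (fderiv ℝ φ) x :=
    (hφ.fderiv_right (m := 1) le_rfl).differentiableAt one_ne_zero
  rw [fderiv_clm_apply hD (differentiableAt_const _)]
  simp

theorem harmonicContOnCl_ball_of_lap_eq_zero {n : ℕ} {φ : EuclideanSpace ℝ (Fin n) → ℝ}
    (hC2 : ContDiffOn ℝ 2 φ (closedBall 0 1))
    (hharm : ∀ x ∈ ball (0 : EuclideanSpace ℝ (Fin n)) 1, lap n φ x = 0) :
    HarmonicContOnCl φ (ball 0 1) := by
  have hsmooth : ∀ x ∈ ball (0 : EuclideanSpace ℝ (Fin n)) 1, ContDiffAt ℝ 2 φ x := fun x hx =>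
    hC2.contDiffAt (closedBall_mem_nhds_of_mem hx)
  refine ⟨fun x hx => ⟨hsmooth x hx, ?_⟩, ?_⟩
  · filter_upwards [isOpen_ball.mem_nhds hx] with y hy
    rw [← lap_eq_laplacian (hsmooth y hy), hharm y hy, Pi.zero_apply]
  · rw [closure_ball 0 one_ne_zero]
    exact hC2.continuousOn

/-- The null eigenspace of the critical-Robin Laplacian on `B^n` consists of the
linear functions. -/
theorem stmt12 (n : ℕ) (hn : 1 ≤ n) (φ : EuclideanSpace ℝ (Fin n) → ℝ)
    (hC2 : ContDiffOn ℝ 2 φ (closedBall 0 1))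
    (hharm : ∀ x ∈ ball (0 : EuclideanSpace ℝ (Fin n)) 1, lap n φ x = 0)
    (hbc : ∀ x : EuclideanSpace ℝ (Fin n), ‖x‖ = 1 →
      fderivWithin ℝ φ (closedBall 0 1) x x = φ x) :
    ∃ a : EuclideanSpace ℝ (Fin n),
      ∀ x ∈ closedBall (0 : EuclideanSpace ℝ (Fin n)) 1, φ x = ⟪a, x⟫ := by
  have : Nonempty (Fin n) := ⟨⟨0, hn⟩⟩
  have hφ := harmonicContOnCl_ball_of_lap_eq_zero hC2 hharm
  obtain ⟨K, hK⟩ := exists_abs_comp_smul_sub_le_sq hC2 hbc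
  have hball : ∀ t ∈ Ioc (0 : ℝ) 1, ∀ x ∈ closedBall (0 : EuclideanSpace ℝ (Fin n)) 1,
      |φ (t • x) - t * φ x| ≤ K * (1 - t) ^ 2 := by
    intro t ht
    rw [← closure_ball 0 one_ne_zero]
    refine (hφ.comp_smul_sub_mul ((convex_ball 0 1).starConvex (mem_ball_self one_pos))
      (Ioc_subset_Icc_self ht)).abs_le_of_forall_frontier_abs_le isOpen_ball isBounded_ball
      fun x hx => hK t (Ioc_subset_Icc_self ht) x ?_
    rwa [frontier_ball 0 one_ne_zero, mem_sphere_zero_iff_norm] at hx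
  have hhom := comp_smul_eq_of_abs_sub_le_sq
    ((convex_closedBall 0 1).starConvex (mem_closedBall_self zero_le_one)) hball
  refine ⟨(toDual ℝ _).symm (fderiv ℝ φ 0), fun x hx => ?_⟩
  rw [toDual_symm_apply]
  exact eq_fderiv_apply_of_comp_smul_eq
    (hφ.differentiableAt (mem_ball_self one_pos)) fun t ht => hhom t ht x hx
end

section
/- Let n ≥ 1 be an integer and t < 0. (i) Setting θ = arcsin(e^{nt}), so that dθ/dt = n tan θ, every real y with (1 − cos θ)/sin θ ≤ y ≤ sin θ satisfies y · (dθ/dt)/sin θ − n tan θ ≤ 0. (ii) Setting θ = arcsin(e^{2nt}), so that dθ/dt = 2n tan θ, every real y with y ≥ (1 − cos θ)/sin θ satisfies y · (dθ/dt)/sin θ − n tan θ ≥ n ((1 − cos θ)/sin θ)² tan θ ≥ 0. (These inequalities express that the shrinking family of spheres S_{arcsin e^{nt}} moves inward no faster than its mean curvature n tan θ, while the family S_{arcsin e^{2nt}} moves inward at least as fast as its mean curvature.) -/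
open Real

/-! Writing `x = e^{at}`, the chain rule gives `(arcsin x)' = a x / √(1 - x²) = a tan (arcsin x)`.
With `θ = arcsin x ∈ (0, π/2)`, inequality (i) is `n tan θ · (y / sin θ - 1) ≤ 0` for `y ≤ sin θ`,
and inequality (ii) reduces, for `y ≥ b := (1 - cos θ) / sin θ`, to the half-angle identity
`2 b / sin θ - 1 = b²`. -/

lemma Real.hasDerivAt_arcsin_exp_mul {a t : ℝ} (hat : a * t < 0) :
    HasDerivAt (fun s : ℝ => arcsin (exp (a * s))) (a * tan (arcsin (exp (a * t)))) t := by
  have hx1 : exp (a * t) < 1 := exp_lt_one_iff.2 hat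
  have hexp : HasDerivAt (fun s : ℝ => exp (a * s)) (exp (a * t) * a) t :=
    ((hasDerivAt_id t).const_mul a).exp.congr_deriv (by simp)
  refine ((hasDerivAt_arcsin (by linarith [exp_pos (a * t)]) hx1.ne).comp t hexp).congr_deriv ?_
  rw [tan_arcsin]
  ring

lemma Real.arcsin_exp_mem_Ioo {a t : ℝ} (hat : a * t < 0) :
    arcsin (exp (a * t)) ∈ Set.Ioo 0 (π / 2) :=
  ⟨arcsin_pos.2 (exp_pos _), arcsin_lt_pi_div_two.2 (exp_lt_one_iff.2 hat)⟩

lemma Real.sq_one_sub_cos_div_sin {θ : ℝ} (hθ : sin θ ≠ 0) :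
    ((1 - cos θ) / sin θ) ^ 2 = 2 * ((1 - cos θ) / sin θ) / sin θ - 1 := by
  field_simp
  linear_combination sin_sq_add_cos_sq θ

section SphereSpeed

variable {θ : ℝ} (hθ : θ ∈ Set.Ioo 0 (π / 2)) {c : ℝ} (hc : 0 ≤ c)
include hθ hc

lemma mul_tan_div_sin_sub_tan_nonpos {y : ℝ} (hy : y ≤ sin θ) :
    y * (c * tan θ) / sin θ - c * tan θ ≤ 0 := by
  have hsin : 0 < sin θ := sin_pos_of_pos_of_lt_pi hθ.1 (hθ.2.trans (half_lt_self pi_pos))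
  have htan : 0 ≤ c * tan θ := mul_nonneg hc (tan_pos_of_pos_of_lt_pi_div_two hθ.1 hθ.2).le
  rw [sub_nonpos, div_le_iff₀ hsin, mul_comm]
  exact mul_le_mul_of_nonneg_left hy htan

lemma mul_sq_tan_le_mul_two_tan_div_sin_sub_tan {y : ℝ} (hy : (1 - cos θ) / sin θ ≤ y) :
    c * ((1 - cos θ) / sin θ) ^ 2 * tan θ ≤ y * (2 * c * tan θ) / sin θ - c * tan θ := by
  have hsin : 0 < sin θ := sin_pos_of_pos_of_lt_pi hθ.1 (hθ.2.trans (half_lt_self pi_pos))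
  have htan : 0 ≤ c * tan θ := mul_nonneg hc (tan_pos_of_pos_of_lt_pi_div_two hθ.1 hθ.2).le
  calc c * ((1 - cos θ) / sin θ) ^ 2 * tan θ
      = (1 - cos θ) / sin θ * (2 * c * tan θ) / sin θ - c * tan θ := by
        rw [sq_one_sub_cos_div_sin hsin.ne']
        field_simp
    _ ≤ y * (2 * c * tan θ) / sin θ - c * tan θ := by
        gcongr
        linarith

end SphereSpeed

/-- The family `S_{arcsin e^{nt}}` moves inward no faster than its mean curvature
`n tan θ`, while the family `S_{arcsin e^{2nt}}` moves inward at least as fast as its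
mean curvature. -/
theorem stmt17 (n : ℕ) (hn : 1 ≤ n) (t : ℝ) (ht : t < 0) :
    -- (i) θ⁻(t) = arcsin (e^{nt})
    (deriv (fun s : ℝ => Real.arcsin (Real.exp ((n : ℝ) * s))) t =
      (n : ℝ) * Real.tan (Real.arcsin (Real.exp ((n : ℝ) * t)))) ∧
    (∀ y : ℝ,
      (1 - Real.cos (Real.arcsin (Real.exp ((n : ℝ) * t)))) /
          Real.sin (Real.arcsin (Real.exp ((n : ℝ) * t))) ≤ y →
      y ≤ Real.sin (Real.arcsin (Real.exp ((n : ℝ) * t))) →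
      y * ((n : ℝ) * Real.tan (Real.arcsin (Real.exp ((n : ℝ) * t)))) /
          Real.sin (Real.arcsin (Real.exp ((n : ℝ) * t))) -
        (n : ℝ) * Real.tan (Real.arcsin (Real.exp ((n : ℝ) * t))) ≤ 0) ∧
    -- (ii) θ⁺(t) = arcsin (e^{2nt})
    (deriv (fun s : ℝ => Real.arcsin (Real.exp (2 * (n : ℝ) * s))) t =
      2 * (n : ℝ) * Real.tan (Real.arcsin (Real.exp (2 * (n : ℝ) * t)))) ∧
    (∀ y : ℝ,
      (1 - Real.cos (Real.arcsin (Real.exp (2 * (n : ℝ) * t)))) /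
          Real.sin (Real.arcsin (Real.exp (2 * (n : ℝ) * t))) ≤ y →
      (n : ℝ) * ((1 - Real.cos (Real.arcsin (Real.exp (2 * (n : ℝ) * t)))) /
            Real.sin (Real.arcsin (Real.exp (2 * (n : ℝ) * t)))) ^ 2 *
          Real.tan (Real.arcsin (Real.exp (2 * (n : ℝ) * t))) ≤
        y * (2 * (n : ℝ) * Real.tan (Real.arcsin (Real.exp (2 * (n : ℝ) * t)))) /
            Real.sin (Real.arcsin (Real.exp (2 * (n : ℝ) * t))) -
          (n : ℝ) * Real.tan (Real.arcsin (Real.exp (2 * (n : ℝ) * t)))) ∧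
    (0 ≤ (n : ℝ) * ((1 - Real.cos (Real.arcsin (Real.exp (2 * (n : ℝ) * t)))) /
          Real.sin (Real.arcsin (Real.exp (2 * (n : ℝ) * t)))) ^ 2 *
        Real.tan (Real.arcsin (Real.exp (2 * (n : ℝ) * t)))) := by
  have hn₀ : (0 : ℝ) < n := by exact_mod_cast hn
  have h₁ : (n : ℝ) * t < 0 := mul_neg_of_pos_of_neg hn₀ ht
  have h₂ : 2 * (n : ℝ) * t < 0 := mul_neg_of_pos_of_neg (by positivity) ht
  have hθ₂ := arcsin_exp_mem_Ioo h₂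
  refine ⟨(hasDerivAt_arcsin_exp_mul h₁).deriv,
    fun y _ hy => mul_tan_div_sin_sub_tan_nonpos (arcsin_exp_mem_Ioo h₁) hn₀.le hy,
    (hasDerivAt_arcsin_exp_mul h₂).deriv,
    fun y hy => mul_sq_tan_le_mul_two_tan_div_sin_sub_tan hθ₂ hn₀.le hy, ?_⟩
  have htan := tan_pos_of_pos_of_lt_pi_div_two hθ₂.1 hθ₂.2
  positivity
end
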